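/- Let (X, ≤) be a lattice equipped with a locally compact, connected Hausdorff topology such that both the meet (x, y) ↦ x ⊓ y and the join (x, y) ↦ x ⊔ y are continuous from X × X to X. Then the canonical map x ↦ x↓ = {z ∈ X : z ≤ x} is a topological embedding (a homeomorphism onto its image) of X into C(X) equipped with the Fell topology, and it is an order-embedding: x ≤ y if and only if x↓ ⊆ y↓. -/

import Mathlib

open Set Filter Topology TopologicalSpace

/-- The Fell topology on the hyperspace of closed subsets of `X`: it is generated by the
sets `{A : A ∩ O ≠ ∅}` for `O` open and the sets `{A : A ∩ K = ∅}` for `K` compact. -/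
instance fellTopology (X : Type*) [TopologicalSpace X] : TopologicalSpace (Closeds X) :=
  TopologicalSpace.generateFrom
    ({S | ∃ O : Set X, IsOpen O ∧ S = {A : Closeds X | ((A : Set X) ∩ O).Nonempty}} ∪
     {S | ∃ K : Set X, IsCompact K ∧ S = {A : Closeds X | (A : Set X) ∩ K = ∅}})

/-- In a Hausdorff topological ∧-semilattice, every principal ideal is closed. -/
lemma isClosed_Iic_of_continuous_inf {X : Type*} [SemilatticeInf X] [TopologicalSpace X]
    [T2Space X] (hmeet : Continuous fun p : X × X => p.1 ⊓ p.2) (x : X) :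
    IsClosed (Set.Iic x) := by
  have e : Set.Iic x = {z : X | z ⊓ x = z} := by ext z; simp [inf_eq_left]
  rw [e]
  exact isClosed_eq (hmeet.comp (continuous_id.prodMk continuous_const)) continuous_id

section Aux

variable {X : Type*} [SemilatticeInf X] [TopologicalSpace X] [T2Space X]

/-- The order graph is closed in a Hausdorff topological ∧-semilattice. -/
lemma isClosed_le_graph_of_continuous_inf
    (hmeet : Continuous fun p : X × X => p.1 ⊓ p.2) :
    IsClosed {p : X × X | p.1 ≤ p.2} := by
  have e : {p : X × X | p.1 ≤ p.2} = {p : X × X | p.1 ⊓ p.2 = p.1} := by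
    ext p; simp [inf_eq_left]
  rw [e]; exact isClosed_eq hmeet continuous_fst

/-- The upward closure of a compact set is closed. -/
lemma isClosed_upClosure_of_continuous_inf
    (hmeet : Continuous fun p : X × X => p.1 ⊓ p.2) {K : Set X} (hK : IsCompact K) :
    IsClosed {x : X | ∃ z ∈ K, z ≤ x} := by
  have e : {x : X | ∃ z ∈ K, z ≤ x} =
      Prod.snd '' {p : K × X | (p.1 : X) ≤ p.2} := by
    ext x
    constructor
    · rintro ⟨z, hz, h⟩; exact ⟨⟨⟨z, hz⟩, x⟩, h, rfl⟩
    · rintro ⟨⟨⟨z, hz⟩, x'⟩, h, rfl⟩; exact ⟨z, hz, h⟩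
  rw [e]
  haveI : CompactSpace K := isCompact_iff_compactSpace.1 hK
  exact isClosedMap_snd_of_compactSpace _
    ((isClosed_le_graph_of_continuous_inf hmeet).preimage
      ((continuous_subtype_val.comp continuous_fst).prodMk continuous_snd))

/-- The downward closure of a compact set is closed. -/
lemma isClosed_downClosure_of_continuous_inf
    (hmeet : Continuous fun p : X × X => p.1 ⊓ p.2) {K : Set X} (hK : IsCompact K) :
    IsClosed {x : X | ∃ z ∈ K, x ≤ z} := by
  have e : {x : X | ∃ z ∈ K, x ≤ z} =
      Prod.snd '' {p : K × X | p.2 ≤ (p.1 : X)} := by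
    ext x
    constructor
    · rintro ⟨z, hz, h⟩; exact ⟨⟨⟨z, hz⟩, x⟩, h, rfl⟩
    · rintro ⟨⟨⟨z, hz⟩, x'⟩, h, rfl⟩; exact ⟨z, hz, h⟩
  rw [e]
  haveI : CompactSpace K := isCompact_iff_compactSpace.1 hK
  exact isClosedMap_snd_of_compactSpace _
    ((isClosed_le_graph_of_continuous_inf hmeet).preimage
      (continuous_snd.prodMk (continuous_subtype_val.comp continuous_fst)))

end Aux

/-- Let `(X, ≤)` be a lattice with a locally compact, connected Hausdorff
topology making meet and join continuous.  Then the canonical map `x ↦ x↓ = Iic x` is a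
topological embedding of `X` into `C(X)` with the Fell topology, and an order-embedding:
`x ≤ y ↔ Iic x ⊆ Iic y`. -/
theorem isEmbedding_principalIdeal_fell_of_connected_lattice
    {X : Type*} [Lattice X] [TopologicalSpace X] [T2Space X] [LocallyCompactSpace X]
    [ConnectedSpace X]
    (hmeet : Continuous fun p : X × X => p.1 ⊓ p.2)
    (hjoin : Continuous fun p : X × X => p.1 ⊔ p.2) :
    IsEmbedding (fun x : X =>
      (⟨Set.Iic x, isClosed_Iic_of_continuous_inf hmeet x⟩ : Closeds X)) ∧
    ∀ x y : X, x ≤ y ↔ Set.Iic x ⊆ Set.Iic y := by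
  haveI : OrderClosedTopology X := ⟨isClosed_le_graph_of_continuous_inf hmeet⟩
  set f : X → Closeds X := fun x =>
    ⟨Set.Iic x, isClosed_Iic_of_continuous_inf hmeet x⟩ with hfdef
  refine ⟨?_, fun x y => Iic_subset_Iic.symm⟩
  have hinj : Function.Injective f := by
    intro x y h
    exact Iic_injective (congrArg SetLike.coe h)
  -- continuity of f
  have hcont : Continuous f := by
    apply continuous_generateFrom_iff.mpr
    rintro S (⟨O, hO, rfl⟩ | ⟨K, hK, rfl⟩)
    · rw [isOpen_iff_forall_mem_open]
      rintro x ⟨z, hzx, hzO⟩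
      refine ⟨{y : X | z ⊓ y ∈ O}, ?_, ?_, ?_⟩
      · intro y hy; exact ⟨z ⊓ y, inf_le_right, hy⟩
      · exact hO.preimage (hmeet.comp (continuous_const.prodMk continuous_id))
      · show z ⊓ x ∈ O
        rwa [inf_eq_left.2 hzx]
    · have e : f ⁻¹' {A : Closeds X | (A : Set X) ∩ K = ∅} = {x : X | ∃ z ∈ K, z ≤ x}ᶜ := by
        ext x
        simp only [Set.mem_preimage, Set.mem_setOf_eq, Set.mem_compl_iff,
          Set.eq_empty_iff_forall_notMem]
        constructor
        · rintro h ⟨z, hzK, hzx⟩; exact h z ⟨hzx, hzK⟩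
        · rintro h z ⟨hzx, hzK⟩; exact h ⟨z, hzK, hzx⟩
      rw [e]
      exact (isClosed_upClosure_of_continuous_inf hmeet hK).isOpen_compl
  -- key neighborhood property
  have key : ∀ x : X, ∀ U ∈ 𝓝 x, ∃ V ∈ 𝓝 (f x), f ⁻¹' V ⊆ U := by
    intro x U hU
    obtain ⟨K, hKx, hKU, hK⟩ := local_compact_nhds hU
    have hKcl : IsClosed K := hK.isClosed
    have hxint : x ∈ interior K := mem_interior_iff_mem_nhds.2 hKx
    have hFK : frontier K ⊆ K := hKcl.frontier_subset
    have hFcomp : IsCompact (frontier K) := hK.of_isClosed_subset isClosed_frontier hFK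
    -- down closure of frontier K ∩ Iic x
    set D := {w : X | ∃ z ∈ frontier K ∩ Set.Iic x, w ≤ z} with hDdef
    have hDcl : IsClosed D :=
      isClosed_downClosure_of_continuous_inf hmeet (hFcomp.inter_right isClosed_Iic)
    have hxD : x ∉ D := by
      rintro ⟨z, ⟨hzF, hzx⟩, hxz⟩
      have : z = x := le_antisymm hzx hxz
      subst this
      rw [hKcl.frontier_eq] at hzF
      exact hzF.2 hxint
    obtain ⟨Q, hQx, hQO', hQ⟩ :=
      local_compact_nhds ((isOpen_interior.sdiff hDcl).mem_nhds ⟨hxint, hxD⟩)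
    set C := frontier K ∩ {w : X | ∃ z ∈ Q, z ≤ w} with hCdef
    have hCcomp : IsCompact C :=
      hFcomp.inter_right (isClosed_upClosure_of_continuous_inf hmeet hQ)
    refine ⟨{A : Closeds X | ((A : Set X) ∩ interior Q).Nonempty} ∩
      {A : Closeds X | (A : Set X) ∩ C = ∅}, ?_, ?_⟩
    · have hV1 : IsOpen {A : Closeds X | ((A : Set X) ∩ interior Q).Nonempty} :=
        isOpen_generateFrom_of_mem (Or.inl ⟨interior Q, isOpen_interior, rfl⟩)
      have hV2 : IsOpen {A : Closeds X | (A : Set X) ∩ C = ∅} :=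
        isOpen_generateFrom_of_mem (Or.inr ⟨C, hCcomp, rfl⟩)
      refine (hV1.inter hV2).mem_nhds ⟨?_, ?_⟩
      · exact ⟨x, le_rfl, mem_interior_iff_mem_nhds.2 hQx⟩
      · show Set.Iic x ∩ C = ∅
        rw [Set.eq_empty_iff_forall_notMem]
        rintro w ⟨hwx, hwF, z, hzQ, hzw⟩
        exact (hQO' hzQ).2 ⟨w, ⟨hwF, hwx⟩, hzw⟩
    · rintro y ⟨⟨z, hzy, hzQi⟩, hyC⟩
      have hyC' : Set.Iic y ∩ C = ∅ := hyC
      have hzy' : z ≤ y := hzy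
      have hzQ : z ∈ Q := interior_subset hzQi
      have hzint : z ∈ interior K := (hQO' hzQ).1
      set g : X → X := fun w => z ⊔ (w ⊓ y) with hgdef
      have hgc : Continuous g :=
        hjoin.comp (continuous_const.prodMk
          (hmeet.comp (continuous_id.prodMk continuous_const)))
      have hSy : ∀ s ∈ Set.range g, s ≤ y := by
        rintro _ ⟨w, rfl⟩; exact sup_le hzy' inf_le_right
      have hSz : ∀ s ∈ Set.range g, z ≤ s := by
        rintro _ ⟨w, rfl⟩; exact le_sup_left
      have hSF : ∀ s ∈ Set.range g, s ∉ frontier K := by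
        intro s hs hsF
        have : s ∈ Set.Iic y ∩ C := ⟨hSy s hs, hsF, z, hzQ, hSz s hs⟩
        rw [hyC'] at this
        exact this
      have hzS : z ∈ Set.range g := ⟨z, by simp [hgdef, inf_eq_left.2 hzy']⟩
      have hyS : y ∈ Set.range g := ⟨y, by simp [hgdef, sup_eq_right.2 hzy']⟩
      have hyint : y ∈ interior K := by
        by_contra hy
        have hynotK : y ∉ K := by
          intro hyK'
          exact hSF y hyS (by rw [hKcl.frontier_eq]; exact ⟨hyK', hy⟩)
        obtain ⟨s, hsS, hs1, hs2⟩ :=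
          isPreconnected_range hgc (interior K) Kᶜ isOpen_interior hKcl.isOpen_compl
            (fun s hs => by
              by_cases h : s ∈ K
              · by_cases h2 : s ∈ interior K
                · exact Or.inl h2
                · exact absurd (show s ∈ frontier K by
                    rw [hKcl.frontier_eq]; exact ⟨h, h2⟩) (hSF s hs)
              · exact Or.inr h)
            ⟨z, hzS, hzint⟩ ⟨y, hyS, hynotK⟩
        exact hs2 (interior_subset hs1)
      exact hKU (interior_subset hyint)
  exact IsEmbedding.mk' f hinj fun x =>
    le_antisymm
      (fun s hs => by
        obtain ⟨V, hV, hVs⟩ := key x s hs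
        exact mem_comap.2 ⟨V, hV, hVs⟩)
      (hcont.tendsto x).le_comap
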